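/- arXiv:2306.05211 — 4 statements merged into one kernel-verified Lean document; each statement's English description precedes it below -/
import Mathlib

section
/- Let X be a finite set, f, h : X → {-1,1}, and let d be a distribution on X such that both Σ_{x: f(x)=1} d_x > 0 and Σ_{x: f(x)=-1} d_x > 0. Let d̄ be the balanced distribution of d with respect to f. If γ ∈ [0,1] and edge_{d̄,f}(h) = Σ_{x∈X} d̄_x f(x) h(x) ≥ γ, then H_d(f|h) ≤ (1 - γ²/2) · H_d(f). -/
/-!
Let `a, b` be the `d`-masses of `f = 1` and `f = -1`, and split them along `h = ±1` as
`a = A + A'`, `b = B + B'`. Then `H_d(f) = 2√(ab)`, `H_d(f|h) = 2√(AB) + 2√(A'B')`, and the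
balanced edge of `h` is `A/a - B/b`. So `H_d(f|h) / H_d(f)` is the inner product of the unit
vectors `(√(A/a), √(A'/a))` and `(√(B/b), √(B'/b))`; its square is one minus the square of their
cross product, and the edge, a difference of squared first coordinates, is at most that cross
product in absolute value. Hence the ratio is at most `√(1 - γ²) ≤ 1 - γ²/2`.
-/

/-- The pseudo-entropy function `G(q) = 2√(q(1-q))`. -/
noncomputable def G (q : ℝ) : ℝ := 2 * Real.sqrt (q * (1 - q))

/-- The entropy `H_d(f) = G(Σ_{x : f x = 1} d x)` of `f` with respect to a distribution `d`. -/
noncomputable def entropy {X : Type*} [Fintype X] (d f : X → ℝ) : ℝ :=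
  G (∑ x ∈ Finset.univ.filter (fun x => f x = 1), d x)

/-- The conditional entropy `H_d(f|h) = p⁺·G(q⁺) + p⁻·G(q⁻)` of `f` given `h` with respect to a
distribution `d`, where `p^± = Σ_{x : h x = ±1} d x` and
`q^± = (Σ_{x : f x = 1 ∧ h x = ±1} d x)/p^±` (in Lean a term with `p^± = 0` is `0`,
since division by zero is zero and `G 0 = 0`). -/
noncomputable def condEntropy {X : Type*} [Fintype X] (d f h : X → ℝ) : ℝ :=
  (∑ x ∈ Finset.univ.filter (fun x => h x = 1), d x) *
    G ((∑ x ∈ Finset.univ.filter (fun x => f x = 1 ∧ h x = 1), d x) /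
       (∑ x ∈ Finset.univ.filter (fun x => h x = 1), d x)) +
  (∑ x ∈ Finset.univ.filter (fun x => h x = -1), d x) *
    G ((∑ x ∈ Finset.univ.filter (fun x => f x = 1 ∧ h x = -1), d x) /
       (∑ x ∈ Finset.univ.filter (fun x => h x = -1), d x))

lemma mul_G_div {p s : ℝ} (hs : 0 ≤ s) (hsp : s ≤ p) :
    p * G (s / p) = 2 * √(s * (p - s)) := by
  rcases (hs.trans hsp).eq_or_lt with rfl | hp
  · simp [le_antisymm hsp hs, G]
  · have hq : s / p * (1 - s / p) = s * (p - s) / p ^ 2 := by field_simp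
    rw [G, hq, Real.sqrt_div' _ (sq_nonneg p), Real.sqrt_sq hp.le]
    field_simp

lemma mul_add_mul_le_one_sub_sq_div_two {α β c e γ : ℝ} (hαβ : α ^ 2 + β ^ 2 = 1)
    (hce : c ^ 2 + e ^ 2 = 1) (hγ : 0 ≤ γ) (hγα : γ ≤ α ^ 2 - c ^ 2) :
    α * c + β * e ≤ 1 - γ ^ 2 / 2 := by
  have hsum : (α * e + β * c) ^ 2 ≤ 1 := by
    nlinarith [sq_nonneg (α * c - β * e)]
  have hfactor : α ^ 2 - c ^ 2 = (α * e - β * c) * (α * e + β * c) := by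
    linear_combination c ^ 2 * hαβ - α ^ 2 * hce
  have hγsq : γ ^ 2 ≤ (α * e - β * c) ^ 2 :=
    calc γ ^ 2 ≤ ((α * e - β * c) * (α * e + β * c)) ^ 2 :=
          pow_le_pow_left₀ hγ (hγα.trans_eq hfactor) 2
      _ = (α * e - β * c) ^ 2 * (α * e + β * c) ^ 2 := mul_pow _ _ 2
      _ ≤ (α * e - β * c) ^ 2 := mul_le_of_le_one_right (sq_nonneg _) hsum
  have hdot : (α * c + β * e) ^ 2 + (α * e - β * c) ^ 2 = 1 := by
    linear_combination (c ^ 2 + e ^ 2) * hαβ + hce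
  refine (le_abs_self _).trans (abs_le_of_sq_le_sq ?_ ?_) <;> nlinarith [sq_nonneg (γ ^ 2)]

lemma sqrt_mul_add_sqrt_mul_le {A A' B B' a b γ : ℝ} (hA : 0 ≤ A) (hA' : 0 ≤ A') (hB : 0 ≤ B)
    (hB' : 0 ≤ B') (ha : a = A + A') (hb : b = B + B') (ha0 : 0 < a) (hb0 : 0 < b) (hγ : 0 ≤ γ)
    (hγAB : γ ≤ A / a - B / b) :
    √(A * B) + √(A' * B') ≤ (1 - γ ^ 2 / 2) * √(a * b) := by
  have hsplit : ∀ {P Q : ℝ}, 0 ≤ P → 0 ≤ Q → √(P * Q) = √(P / a) * √(Q / b) * √(a * b) := by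
    intro P Q hP hQ
    rw [← Real.sqrt_mul (div_nonneg hP ha0.le), ← Real.sqrt_mul (by positivity)]
    congr 1
    field_simp
  have hnorm : ∀ {P Q c : ℝ}, 0 ≤ P → 0 ≤ Q → c = P + Q → 0 < c →
      √(P / c) ^ 2 + √(Q / c) ^ 2 = 1 := by
    intro P Q c hP hQ hc hc0
    rw [Real.sq_sqrt (by positivity), Real.sq_sqrt (by positivity), ← add_div, ← hc,
      div_self hc0.ne']
  have hdot := mul_add_mul_le_one_sub_sq_div_two (hnorm hA hA' ha ha0) (hnorm hB hB' hb hb0) hγ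
    (by rwa [Real.sq_sqrt (by positivity), Real.sq_sqrt (by positivity)])
  rw [hsplit hA hB, hsplit hA' hB', ← add_mul]
  exact mul_le_mul_of_nonneg_right hdot (Real.sqrt_nonneg _)

section Sign

variable {X : Type*} {σ : X → ℝ}

lemma sum_eq_sum_filter_add_sum_filter_of_sign (hσ : ∀ x, σ x = 1 ∨ σ x = -1) (s : Finset X)
    (g : X → ℝ) :
    ∑ x ∈ s, g x =
      ∑ x ∈ s.filter (fun x => σ x = 1), g x + ∑ x ∈ s.filter (fun x => σ x = -1), g x := by
  rw [← Finset.sum_filter_add_sum_filter_not s (fun x => σ x = 1)]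
  congr 2
  exact Finset.filter_congr fun x _ => by rcases hσ x with hx | hx <;> norm_num [hx]

lemma sum_mul_eq_sum_filter_sub_sum_filter_of_sign (hσ : ∀ x, σ x = 1 ∨ σ x = -1)
    (s : Finset X) (g : X → ℝ) :
    ∑ x ∈ s, g x * σ x =
      ∑ x ∈ s.filter (fun x => σ x = 1), g x - ∑ x ∈ s.filter (fun x => σ x = -1), g x := by
  rw [sum_eq_sum_filter_add_sum_filter_of_sign hσ, sub_eq_add_neg, ← Finset.sum_neg_distrib]
  congr 1 <;> refine Finset.sum_congr rfl fun x hx => ?_ <;> simp [(Finset.mem_filter.1 hx).2]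

end Sign

section Table

variable {X : Type*} [Fintype X] {f h d : X → ℝ}

lemma entropy_eq_two_mul_sqrt (hf : ∀ x, f x = 1 ∨ f x = -1) (hd1 : ∑ x, d x = 1) :
    entropy d f = 2 * √((∑ x ∈ Finset.univ.filter (fun x => f x = 1), d x) *
      ∑ x ∈ Finset.univ.filter (fun x => f x = -1), d x) := by
  rw [entropy, G, sub_eq_of_eq_add'
    (hd1.symm.trans (sum_eq_sum_filter_add_sum_filter_of_sign hf Finset.univ d))]

lemma condEntropy_eq_two_mul_sqrt_add (hf : ∀ x, f x = 1 ∨ f x = -1) (hd0 : ∀ x, 0 ≤ d x) :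
    condEntropy d f h =
      2 * √((∑ x ∈ Finset.univ.filter (fun x => f x = 1 ∧ h x = 1), d x) *
        ∑ x ∈ Finset.univ.filter (fun x => f x = -1 ∧ h x = 1), d x) +
      2 * √((∑ x ∈ Finset.univ.filter (fun x => f x = 1 ∧ h x = -1), d x) *
        ∑ x ∈ Finset.univ.filter (fun x => f x = -1 ∧ h x = -1), d x) := by
  have hd : ∀ s : Finset X, 0 ≤ ∑ x ∈ s, d x := fun s => Finset.sum_nonneg fun x _ => hd0 x
  have hmarg : ∀ c, ∑ x ∈ Finset.univ.filter (fun x => h x = c), d x =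
      ∑ x ∈ Finset.univ.filter (fun x => f x = 1 ∧ h x = c), d x +
        ∑ x ∈ Finset.univ.filter (fun x => f x = -1 ∧ h x = c), d x := fun c => by
    rw [sum_eq_sum_filter_add_sum_filter_of_sign hf, Finset.filter_comm,
      Finset.filter_comm (p := fun x => h x = c), Finset.filter_filter, Finset.filter_filter]
  rw [condEntropy, hmarg, hmarg, mul_G_div (hd _) (le_add_of_nonneg_right (hd _)),
    mul_G_div (hd _) (le_add_of_nonneg_right (hd _)), add_sub_cancel_left, add_sub_cancel_left]

lemma sum_filter_balanced_mul {dbar : X → ℝ}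
    (hdbar : ∀ x, dbar x =
      d x / (2 * ∑ x' ∈ Finset.univ.filter (fun x' => f x' = f x), d x'))
    (c : ℝ) (g : X → ℝ) :
    ∑ x ∈ Finset.univ.filter (fun x => f x = c), dbar x * g x =
      (∑ x ∈ Finset.univ.filter (fun x => f x = c), d x * g x) /
        (2 * ∑ x ∈ Finset.univ.filter (fun x => f x = c), d x) := by
  rw [Finset.sum_div]
  refine Finset.sum_congr rfl fun x hx => ?_
  rw [hdbar, (Finset.mem_filter.1 hx).2]
  ring

end Table

/-- if the balanced distribution `d̄` of `d` with respect to `f` gives `h` an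
edge of at least `γ ∈ [0,1]`, then `H_d(f|h) ≤ (1 - γ²/2)·H_d(f)`. -/
theorem stmt3 {X : Type*} [Fintype X]
    (f h : X → ℝ) (hf : ∀ x, f x = 1 ∨ f x = -1) (hh : ∀ x, h x = 1 ∨ h x = -1)
    (d : X → ℝ) (hd0 : ∀ x, 0 ≤ d x) (hd1 : ∑ x, d x = 1)
    (hpos : 0 < ∑ x ∈ Finset.univ.filter (fun x => f x = 1), d x)
    (hneg : 0 < ∑ x ∈ Finset.univ.filter (fun x => f x = -1), d x)
    (dbar : X → ℝ)
    (hdbar : ∀ x, dbar x =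
      d x / (2 * ∑ x' ∈ Finset.univ.filter (fun x' => f x' = f x), d x'))
    (γ : ℝ) (hγ : γ ∈ Set.Icc (0 : ℝ) 1)
    (hedge : γ ≤ ∑ x, dbar x * f x * h x) :
    condEntropy d f h ≤ (1 - γ^2/2) * entropy d f := by
  have ha :=
    sum_eq_sum_filter_add_sum_filter_of_sign hh (Finset.univ.filter (fun x => f x = 1)) d
  have hb :=
    sum_eq_sum_filter_add_sum_filter_of_sign hh (Finset.univ.filter (fun x => f x = -1)) d
  have hedge' := hedge.trans_eq <| by
    simp_rw [mul_right_comm (dbar _) (f _) (h _)]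
    rw [sum_mul_eq_sum_filter_sub_sum_filter_of_sign hf, sum_filter_balanced_mul hdbar,
      sum_filter_balanced_mul hdbar, sum_mul_eq_sum_filter_sub_sum_filter_of_sign hh,
      sum_mul_eq_sum_filter_sub_sum_filter_of_sign hh]
  simp only [Finset.filter_filter] at ha hb hedge'
  have hd : ∀ s : Finset X, 0 ≤ ∑ x ∈ s, d x := fun s => Finset.sum_nonneg fun x _ => hd0 x
  have key := sqrt_mul_add_sqrt_mul_le (hd _) (hd _) (hd _) (hd _) ha hb hpos hneg hγ.1
    (hedge'.trans_eq ?_)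
  · rw [condEntropy_eq_two_mul_sqrt_add hf hd0, entropy_eq_two_mul_sqrt hf hd1]
    linarith
  · have := hpos.ne'
    have := hneg.ne'
    field_simp
    rw [ha, hb]
    ring
end

section
/- Let 0 ≤ a ≤ b ≤ 1 and δ, λ > 0 be such that for every q ∈ [a,b], sup_{q'∈[a,b]} G(q') ≤ max{δ, (1+λ)·G(q)}. Let N be a finite nonempty set with p_u > 0 and q_u ∈ [a,b] for each u ∈ N, and set P = Σ_{u∈N} p_u and Q = (Σ_{u∈N} p_u q_u)/P. Then P·G(Q) ≤ δ·P + (1+λ)·Σ_{u∈N} p_u G(q_u). -/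
lemma G_nonneg (q : ℝ) : 0 ≤ G q := by
  unfold G; positivity

theorem Convex.sum_mul_apply_centerMass_le {ι E : Type*} [AddCommGroup E] [Module ℝ E]
    {s : Set E} (hs : Convex ℝ s) {f : E → ℝ} (hf : ∀ x ∈ s, 0 ≤ f x) {δ c : ℝ}
    (hδ : 0 ≤ δ) (hc : 0 ≤ c) (hnet : ∀ x ∈ s, ∀ y ∈ s, f y ≤ max δ (c * f x))
    {t : Finset ι} {w : ι → ℝ} {z : ι → E} (hw : ∀ i ∈ t, 0 ≤ w i)
    (hw_pos : 0 < ∑ i ∈ t, w i) (hz : ∀ i ∈ t, z i ∈ s) :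
    (∑ i ∈ t, w i) * f (t.centerMass w z) ≤ δ * ∑ i ∈ t, w i + c * ∑ i ∈ t, w i * f (z i) := by
  have hmem : t.centerMass w z ∈ s := hs.centerMass_mem hw hw_pos hz
  have hbound : ∀ i ∈ t, f (t.centerMass w z) ≤ δ + c * f (z i) := fun i hi =>
    (hnet _ (hz i hi) _ hmem).trans
      (max_le_add_of_nonneg hδ (mul_nonneg hc (hf _ (hz i hi))))
  calc (∑ i ∈ t, w i) * f (t.centerMass w z)
      = ∑ i ∈ t, w i * f (t.centerMass w z) := Finset.sum_mul ..
    _ ≤ ∑ i ∈ t, w i * (δ + c * f (z i)) :=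
        Finset.sum_le_sum fun i hi => mul_le_mul_of_nonneg_left (hbound i hi) (hw i hi)
    _ = δ * ∑ i ∈ t, w i + c * ∑ i ∈ t, w i * f (z i) := by
        rw [Finset.mul_sum, Finset.mul_sum, ← Finset.sum_add_distrib]
        exact Finset.sum_congr rfl fun i _ => by ring

theorem stmt7_general (a b δ lam : ℝ)
    (hδ : 0 < δ) (hlam : 0 < lam)
    (hnet : ∀ q ∈ Set.Icc a b, ∀ q' ∈ Set.Icc a b, G q' ≤ max δ ((1 + lam) * G q))
    {N : Type*} [Fintype N] [Nonempty N]
    (p q : N → ℝ) (hp : ∀ u, 0 < p u) (hq : ∀ u, q u ∈ Set.Icc a b)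
    (P Q : ℝ) (hP : P = ∑ u, p u) (hQ : Q = (∑ u, p u * q u) / P) :
    P * G Q ≤ δ * P + (1 + lam) * ∑ u, p u * G (q u) := by
  have hQ_centerMass : Q = Finset.univ.centerMass p q := by
    simp only [hQ, hP, Finset.centerMass, smul_eq_mul, div_eq_inv_mul]
  subst hP
  rw [hQ_centerMass]
  exact (convex_Icc a b).sum_mul_apply_centerMass_le (fun x _ => G_nonneg x) hδ.le
    (by linarith) hnet (fun u _ => (hp u).le)
    (Finset.sum_pos (fun u _ => hp u) Finset.univ_nonempty) (fun u _ => hq u)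

/-- if on the interval `[a,b] ⊆ [0,1]` every value of `G` is bounded by
`max{δ, (1+λ)·G(q)}` for every `q ∈ [a,b]` (i.e. `sup_{q'∈[a,b]} G q' ≤ max{δ, (1+λ)·G q}`),
then for positive weights `p_u` and points `q_u ∈ [a,b]`, with `P = Σ_u p_u` and
`Q = (Σ_u p_u q_u)/P`, we have `P·G(Q) ≤ δ·P + (1+λ)·Σ_u p_u G(q_u)`. -/
theorem stmt7 (a b δ lam : ℝ) (ha : 0 ≤ a) (hab : a ≤ b) (hb : b ≤ 1)
    (hδ : 0 < δ) (hlam : 0 < lam)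
    (hnet : ∀ q ∈ Set.Icc a b, ∀ q' ∈ Set.Icc a b, G q' ≤ max δ ((1 + lam) * G q))
    {N : Type*} [Fintype N] [Nonempty N]
    (p q : N → ℝ) (hp : ∀ u, 0 < p u) (hq : ∀ u, q u ∈ Set.Icc a b)
    (P Q : ℝ) (hP : P = ∑ u, p u) (hQ : Q = (∑ u, p u * q u) / P) :
    P * G Q ≤ δ * P + (1 + lam) * ∑ u, p u * G (q u) :=
  stmt7_general a b δ lam hδ hlam hnet p q hp hq P Q hP hQ
end

section
/- Let n ≥ 1 and f : {-1,1}^n → {-1,1}, and define h_i : {-1,1}^n → {-1,1} by h_i(x) = x_i if i ≤ n and h_i(x) = -x_{i-n} if n < i ≤ 2n. Suppose γ ∈ ℝ is such that for every balanced distribution d on {-1,1}^n with respect to f there exists i ∈ {1,…,2n} with Σ_{x∈{-1,1}^n} d_x f(x) h_i(x) ≥ γ. Then there exist w ∈ ℝ^{2n} with w ≥ 0 and Σ_{i=1}^{2n} w_i = 1, and b ∈ ℝ, such that f(x)·(Σ_{i=1}^{2n} w_i h_i(x) + b) ≥ γ for all x ∈ {-1,1}^n; that is, f is a linear threshold function with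 margin at least γ. -/
/-- The value of a `±1` coordinate encoded as a Boolean: `χ true = 1`, `χ false = -1`. -/
def chi (b : Bool) : ℝ := if b then 1 else -1

/-- The hypothesis set of the `2n` (possibly negated) projections on `{-1,1}^n`:
`hyp n i x = x_i` for `i < n` and `hyp n i x = -x_{i-n}` for `n ≤ i < 2n`. -/
def hyp (n : ℕ) (i : Fin (2 * n)) (x : Fin n → Bool) : ℝ :=
  if h : (i : ℕ) < n then chi (x ⟨i, h⟩)
  else -chi (x ⟨(i : ℕ) - n, by have := i.isLt; omega⟩)

/-!
The edge vectors `(Σ_x d_x f(x) h_i(x))_i` of the balanced distributions `d` form a convex set `S`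
which, by hypothesis, misses the open box `{p | ∀ i, p_i < γ}`. A hyperplane separating the two
has a non-negative normal, because the box is unbounded below in every coordinate; normalised,
that normal is a weight vector `w` in the simplex with `⟪w, p⟫ ≥ γ` on `S` (the minimax theorem).
For the balanced distribution `½δ_x + ½δ_y` with `f(x) = 1` and `f(y) = -1` this says that
`g = Σ_i w_i h_i` satisfies `g(x) - g(y) ≥ 2γ`, so the two classes can be split by a bias.
-/

open Finset Filter Topology

theorem exists_bias_of_forall_le_sub {X : Type*} [Finite X] {f g : X → ℝ}
    (hf : ∀ x, f x = 1 ∨ f x = -1) {γ : ℝ}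
    (hgap : ∀ x y, f x = 1 → f y = -1 → 2 * γ ≤ g x - g y) :
    ∃ b, ∀ x, γ ≤ f x * (g x + b) := by
  by_cases hneg : ∃ y, f y = -1
  · obtain ⟨y₀, hy₀, hmax⟩ :=
      Set.exists_max_image {y | f y = -1} g (Set.toFinite _) hneg
    refine ⟨-γ - g y₀, fun x => ?_⟩
    rcases hf x with hx | hx <;> rw [hx]
    · linarith [hgap x y₀ hx hy₀]
    · linarith [hmax x hx]
  · push Not at hneg
    obtain ⟨M, hM⟩ := Finite.exists_le fun x => γ - g x
    refine ⟨M, fun x => ?_⟩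
    rw [(hf x).resolve_right (hneg x)]
    linarith [hM x]

section LowerBox

variable {ι : Type*} [Fintype ι] {a : ι → ℝ} {γ u : ℝ}

theorem nonneg_of_forall_lt_dotProduct_lt [DecidableEq ι]
    (h : ∀ p : ι → ℝ, (∀ i, p i < γ) → a ⬝ᵥ p < u) (i : ι) : 0 ≤ a i := by
  by_contra! hai
  set C := a ⬝ᵥ fun _ => γ - 1
  -- large enough that lowering coordinate `i` by `t` lifts `a ⬝ᵥ p` above `u`
  set t := (|u - C| + 1) / -a i
  have ht : 0 ≤ t := div_nonneg (by positivity) (by linarith)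
  have hlt := h ((fun _ => γ - 1) - Pi.single i t) fun j => by
    rcases eq_or_ne j i with rfl | hj
    · simp only [Pi.sub_apply, Pi.single_eq_same]
      linarith
    · simp [hj]
  have hat : a i * t = -(|u - C| + 1) := by
    rw [mul_div_assoc', mul_comm, mul_div_assoc, div_neg, div_self hai.ne, mul_neg, mul_one]
  rw [dotProduct_sub, dotProduct_single, hat] at hlt
  linarith [le_abs_self (u - C)]

theorem mul_sum_le_of_forall_lt_dotProduct_lt
    (h : ∀ p : ι → ℝ, (∀ i, p i < γ) → a ⬝ᵥ p < u) : γ * ∑ i, a i ≤ u := by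
  have hconst : ∀ c, a ⬝ᵥ (fun _ => c) = c * ∑ i, a i := fun c => by
    simp [dotProduct, Finset.mul_sum, mul_comm]
  have hlim : Tendsto (fun c => c * ∑ i, a i) (𝓝[<] γ) (𝓝 (γ * ∑ i, a i)) :=
    ((continuous_mul_const _).tendsto γ).mono_left nhdsWithin_le_nhds
  exact le_of_tendsto hlim <| eventually_nhdsWithin_of_forall fun c hc =>
    (hconst c ▸ h _ fun _ => hc).le

end LowerBox

theorem ContinuousLinearMap.eq_dotProduct {ι : Type*} [Fintype ι] [DecidableEq ι]
    (φ : (ι → ℝ) →L[ℝ] ℝ) (p : ι → ℝ) : φ p = (fun i => φ fun j => if i = j then 1 else 0) ⬝ᵥ p :=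
  (φ.toLinearMap.pi_apply_eq_sum_univ p).trans (by simp [dotProduct, mul_comm])

theorem exists_mem_stdSimplex_forall_le_dotProduct {ι : Type*} [Fintype ι] [Nonempty ι]
    {S : Set (ι → ℝ)} (hS : Convex ℝ S) {γ : ℝ} (h : ∀ p ∈ S, ∃ i, γ ≤ p i) :
    ∃ w ∈ stdSimplex ℝ ι, ∀ p ∈ S, γ ≤ w ⬝ᵥ p := by
  classical
  rcases S.eq_empty_or_nonempty with rfl | ⟨p₀, hp₀⟩
  · exact ⟨_, single_mem_stdSimplex ℝ (Classical.arbitrary ι), by simp⟩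
  have hdisj : Disjoint (Set.univ.pi fun _ => Set.Iio γ) S :=
    Set.disjoint_left.2 fun p hpO hpS => by
      obtain ⟨i, hi⟩ := h p hpS
      exact (hpO i trivial).not_ge hi
  obtain ⟨φ, u, hφO, hφS⟩ := geometric_hahn_banach_open
    (convex_pi fun _ _ => convex_Iio γ) (isOpen_set_pi Set.finite_univ fun _ _ => isOpen_Iio)
    hS hdisj
  set a := fun i => φ fun j => if i = j then 1 else 0
  have hφ : ∀ p, φ p = a ⬝ᵥ p := φ.eq_dotProduct
  have hbox : ∀ p : ι → ℝ, (∀ i, p i < γ) → a ⬝ᵥ p < u := fun p hp =>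
    hφ p ▸ hφO p fun i _ => hp i
  have ha := nonneg_of_forall_lt_dotProduct_lt hbox
  have hγu := mul_sum_le_of_forall_lt_dotProduct_lt hbox
  have hA : 0 < ∑ i, a i := by
    refine (sum_nonneg fun i _ => ha i).lt_of_ne fun hA => ?_
    have ha0 : a = 0 := funext fun i => (sum_eq_zero_iff_of_nonneg fun j _ => ha j).1 hA.symm i
      (mem_univ i)
    have hu := hbox (fun _ => γ - 1) fun _ => by linarith
    have hu₀ := hφ p₀ ▸ hφS p₀ hp₀
    simp only [ha0, zero_dotProduct] at hu hu₀
    linarith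
  refine ⟨fun i => a i / ∑ j, a j, ⟨fun i => div_nonneg (ha i) hA.le, ?_⟩, fun p hp => ?_⟩
  · rw [← sum_div, div_self hA.ne']
  · have hw : (fun i => a i / ∑ j, a j) ⬝ᵥ p = a ⬝ᵥ p / ∑ j, a j := by
      simp only [dotProduct, div_mul_eq_mul_div, sum_div]
    rw [hw, le_div_iff₀ hA]
    exact hγu.trans (hφ p ▸ hφS p hp)

section Balanced

variable {X ι : Type*} [Fintype X]

def IsBalanced (f d : X → ℝ) : Prop :=
  (∀ x, 0 ≤ d x) ∧ ∑ x ∈ univ.filter (fun x => f x = 1), d x = 1 / 2 ∧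
    ∑ x ∈ univ.filter (fun x => f x = -1), d x = 1 / 2

def edgeVector (f d : X → ℝ) (H : ι → X → ℝ) : ι → ℝ := fun i => ∑ x, d x * f x * H i x

variable {f : X → ℝ}

theorem convex_setOf_isBalanced : Convex ℝ {d | IsBalanced f d} := by
  rintro d₁ ⟨h₁, hp₁, hn₁⟩ d₂ ⟨h₂, hp₂, hn₂⟩ s t hs ht hst
  simp only [Set.mem_ofPred_eq, IsBalanced, Pi.add_apply, Pi.smul_apply, smul_eq_mul,
    sum_add_distrib, ← mul_sum, hp₁, hp₂, hn₁, hn₂]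
  refine ⟨fun x => by have := h₁ x; have := h₂ x; positivity, ?_, ?_⟩ <;> linear_combination hst / 2

theorem convex_edgeVector_image (H : ι → X → ℝ) :
    Convex ℝ ((edgeVector f · H) '' {d | IsBalanced f d}) :=
  convex_setOf_isBalanced.is_linear_image
    ⟨fun d₁ d₂ => funext fun i => by simp [edgeVector, add_mul, sum_add_distrib],
      fun c d => funext fun i => by simp [edgeVector, mul_sum, mul_assoc]⟩

variable [DecidableEq X] {x y : X}

theorem isBalanced_pair (hx : f x = 1) (hy : f y = -1) :
    IsBalanced f (Pi.single x (1 / 2) + Pi.single y (1 / 2)) := by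
  refine ⟨fun z => ?_, ?_, ?_⟩
  · simp only [Pi.add_apply, Pi.single_apply]
    split_ifs <;> norm_num
  all_goals norm_num [sum_add_distrib, sum_pi_single', hx, hy]

theorem edgeVector_pair (H : ι → X → ℝ) (hx : f x = 1) (hy : f y = -1) :
    edgeVector f (Pi.single x (1 / 2) + Pi.single y (1 / 2)) H = fun i => (H i x - H i y) / 2 := by
  ext i
  simp only [edgeVector, Pi.add_apply, Pi.single_apply, add_mul, ite_mul, zero_mul,
    sum_add_distrib, sum_ite_eq', mem_univ, if_true, hx, hy]
  ring

end Balanced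

theorem exists_margin_of_forall_isBalanced {X ι : Type*} [Fintype X] [Fintype ι] [Nonempty ι]
    {f : X → ℝ} (hf : ∀ x, f x = 1 ∨ f x = -1) (H : ι → X → ℝ) {γ : ℝ}
    (h : ∀ d, IsBalanced f d → ∃ i, γ ≤ edgeVector f d H i) :
    ∃ w ∈ stdSimplex ℝ ι, ∃ b, ∀ x, γ ≤ f x * (w ⬝ᵥ (fun i => H i x) + b) := by
  classical
  obtain ⟨w, hw, hwS⟩ := exists_mem_stdSimplex_forall_le_dotProduct (convex_edgeVector_image H)
    (by rintro _ ⟨d, hd, rfl⟩; exact h d hd)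
  refine ⟨w, hw, exists_bias_of_forall_le_sub hf fun x y hx hy => ?_⟩
  have hedge := hwS _ ⟨_, isBalanced_pair hx hy, rfl⟩
  simp only [edgeVector_pair H hx hy, dotProduct, mul_div_assoc', mul_sub, ← sum_div,
    sum_sub_distrib] at hedge ⊢
  linarith

/-- duality direction: if for every balanced distribution `d` with respect to
`f` some projection hypothesis `h_i` has edge at least `γ`, then there are weights `w ≥ 0` with
`Σ_i w_i = 1` and a bias `b` such that `f(x)·(Σ_i w_i·h_i(x) + b) ≥ γ` for all `x`; that is,
`f` is a linear threshold function with margin at least `γ`. -/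
theorem stmt13 (n : ℕ) (hn : 1 ≤ n) (f : (Fin n → Bool) → ℝ)
    (hf : ∀ x, f x = 1 ∨ f x = -1)
    (γ : ℝ)
    (hwha : ∀ d : (Fin n → Bool) → ℝ, (∀ x, 0 ≤ d x) →
      (∑ x ∈ Finset.univ.filter (fun x => f x = 1), d x = 1/2) →
      (∑ x ∈ Finset.univ.filter (fun x => f x = -1), d x = 1/2) →
      ∃ i : Fin (2 * n), γ ≤ ∑ x, d x * f x * hyp n i x) :
    ∃ w : Fin (2 * n) → ℝ, (∀ i, 0 ≤ w i) ∧ ∑ i, w i = 1 ∧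
      ∃ b : ℝ, ∀ x, γ ≤ f x * (∑ i, w i * hyp n i x + b) := by
  have : Nonempty (Fin (2 * n)) := ⟨⟨0, by omega⟩⟩
  obtain ⟨w, ⟨hw₀, hw₁⟩, b, hb⟩ :=
    exists_margin_of_forall_isBalanced hf (hyp n) fun d ⟨hd, hpos, hneg⟩ => hwha d hd hpos hneg
  exact ⟨w, hw₀, hw₁, b, hb⟩
end

section
/- Let n ≥ 1 and let f : {-1,1}^n → {-1,1} be non-constant, and define h_i : {-1,1}^n → {-1,1} by h_i(x) = x_i if i ≤ n and h_i(x) = -x_{i-n} if n < i ≤ 2n. Then the maximum margin equals the minimum worst-case edge: sup { ρ ∈ ℝ : ∃ w ∈ ℝ^{2n}, w ≥ 0, Σ_{i=1}^{2n} w_i = 1, ∃ b ∈ ℝ, ∀ x ∈ {-1,1}^n, f(x)·(Σ_{i=1}^{2n} w_i h_i(x) + b) ≥ ρ } = inf { max_{1≤i≤2n} Σ_{x∈{-1,1}^n} d_x f(x) h_i(x) : d is a balanced distribution on {-1,1}^n with respect to f }. -/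
open Finset Matrix

lemma LinearMap.quasilinearOn {E : Type*} [AddCommGroup E] [Module ℝ E] (l : E →ₗ[ℝ] ℝ)
    {s : Set E} (hs : Convex ℝ s) : QuasilinearOn ℝ s l :=
  ⟨(l.convexOn hs).quasiconvexOn, (l.concaveOn hs).quasiconcaveOn⟩

theorem Matrix.exists_saddlePoint_vecMul_dotProduct {X I : Type*} [Fintype X] [Fintype I]
    (B : Matrix X I ℝ) {S : Set (X → ℝ)} {T : Set (I → ℝ)}
    (hS : S.Nonempty) (hSc : Convex ℝ S) (hSk : IsCompact S)
    (hT : T.Nonempty) (hTc : Convex ℝ T) (hTk : IsCompact T) :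
    ∃ d ∈ S, ∃ w ∈ T, ∀ d' ∈ S, ∀ w' ∈ T, (d ᵥ* B) ⬝ᵥ w' ≤ (d' ᵥ* B) ⬝ᵥ w :=
  Sion.exists_isSaddlePointOn hS hSc hSk
    (fun w _ => (by fun_prop : Continuous fun d : X → ℝ => (d ᵥ* B) ⬝ᵥ w)
      |>.lowerSemicontinuous.lowerSemicontinuousOn _)
    (fun w _ => (((dotProductBilin ℝ ℝ).flip w ∘ₗ B.vecMulLinear).quasilinearOn hSc).1)
    hTc hT hTk
    (fun d _ => (by fun_prop : Continuous fun w : I → ℝ => (d ᵥ* B) ⬝ᵥ w)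
      |>.upperSemicontinuous.upperSemicontinuousOn _)
    (fun d _ => ((dotProductBilin ℝ ℝ (d ᵥ* B)).quasilinearOn hTc).2)

lemma dotProduct_le_iSup_of_mem_stdSimplex {I : Type*} [Fintype I] {w : I → ℝ}
    (hw : w ∈ stdSimplex ℝ I) (v : I → ℝ) :
    v ⬝ᵥ w ≤ ⨆ i, v i :=
  calc v ⬝ᵥ w ≤ ∑ i, (⨆ j, v j) * w i :=
        sum_le_sum fun i _ => mul_le_mul_of_nonneg_right
          (le_ciSup (Finite.bddAbove_range v) i) (hw.1 i)
    _ = ⨆ i, v i := by rw [← mul_sum, hw.2, mul_one]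

namespace Margin

variable {X I : Type*} {f : X → ℝ}

lemma exists_eq_one_and_exists_eq_neg_one (hf : ∀ x, f x = 1 ∨ f x = -1)
    (hfnc : ∃ x y, f x ≠ f y) : (∃ x, f x = 1) ∧ ∃ y, f y = -1 := by
  obtain ⟨x, y, hxy⟩ := hfnc
  rcases hf x with hx | hx <;> rcases hf y with hy | hy
  exacts [absurd (hx.trans hy.symm) hxy, ⟨⟨x, hx⟩, y, hy⟩, ⟨⟨y, hy⟩, x, hx⟩,
    absurd (hx.trans hy.symm) hxy]

variable [Fintype X] [Fintype I]

def marginSet (f : X → ℝ) (H : I → X → ℝ) : Set ℝ :=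
  {ρ | ∃ w ∈ stdSimplex ℝ I, ∃ b, ∀ x, ρ ≤ f x * (∑ i, w i * H i x + b)}

def balancedSet (f : X → ℝ) : Set (X → ℝ) :=
  {d | (∀ x, 0 ≤ d x) ∧ ∑ x ∈ univ.filter (f · = 1), d x = 1 / 2 ∧
    ∑ x ∈ univ.filter (f · = -1), d x = 1 / 2}

-- `(d ᵥ* edgeMatrix f H) i` is the edge `Σ_x d_x f(x) h_i(x)` of `h_i` under `d`.
def edgeMatrix (f : X → ℝ) (H : I → X → ℝ) : Matrix X I ℝ := of fun x i => f x * H i x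

noncomputable def maxEdge (f : X → ℝ) (H : I → X → ℝ) (d : X → ℝ) : ℝ :=
  ⨆ i, (d ᵥ* edgeMatrix f H) i

lemma vecMul_edgeMatrix_dotProduct (H : I → X → ℝ) (d : X → ℝ) (w : I → ℝ) :
    (d ᵥ* edgeMatrix f H) ⬝ᵥ w = ∑ x, d x * f x * ∑ i, w i * H i x := by
  simp only [dotProduct, vecMul, edgeMatrix, of_apply, sum_mul, mul_sum]
  rw [sum_comm]
  exact sum_congr rfl fun x _ => sum_congr rfl fun i _ => by ring

lemma sum_eq_sum_filter_add_sum_filter (hf : ∀ x, f x = 1 ∨ f x = -1) (g : X → ℝ) :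
    ∑ x, g x =
      ∑ x ∈ univ.filter (f · = 1), g x + ∑ x ∈ univ.filter (f · = -1), g x := by
  rw [← sum_filter_add_sum_filter_not univ (f · = 1)]
  congr 2
  ext x
  rcases hf x with h | h <;> simp [h] <;> norm_num

section balancedSet

variable {d : X → ℝ}

lemma sum_eq_one_of_mem_balancedSet (hf : ∀ x, f x = 1 ∨ f x = -1) (hd : d ∈ balancedSet f) :
    ∑ x, d x = 1 := by
  rw [sum_eq_sum_filter_add_sum_filter hf, hd.2.1, hd.2.2]
  norm_num

lemma sum_mul_eq_zero_of_mem_balancedSet (hf : ∀ x, f x = 1 ∨ f x = -1)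
    (hd : d ∈ balancedSet f) : ∑ x, d x * f x = 0 := by
  have hpos : ∑ x ∈ univ.filter (f · = 1), d x * f x = 1 / 2 := by
    rw [← hd.2.1]
    exact sum_congr rfl fun x hx => by rw [(mem_filter.1 hx).2, mul_one]
  have hneg : ∑ x ∈ univ.filter (f · = -1), d x * f x = -(1 / 2) := by
    rw [← hd.2.2, ← sum_neg_distrib]
    exact sum_congr rfl fun x hx => by rw [(mem_filter.1 hx).2, mul_neg_one]
  rw [sum_eq_sum_filter_add_sum_filter hf, hpos, hneg, add_neg_cancel]

lemma convex_balancedSet : Convex ℝ (balancedSet f) := by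
  rintro d ⟨hd, hd₁, hd₂⟩ d' ⟨hd', hd'₁, hd'₂⟩ a b ha hb hab
  refine ⟨fun x => add_nonneg (mul_nonneg ha (hd x)) (mul_nonneg hb (hd' x)), ?_, ?_⟩ <;>
  · simp only [Pi.add_apply, Pi.smul_apply, smul_eq_mul, sum_add_distrib, ← mul_sum,
      hd₁, hd₂, hd'₁, hd'₂]
    linear_combination hab / 2

lemma isClosed_balancedSet : IsClosed (balancedSet f) := by
  simp only [balancedSet, Set.ofPred_and, Set.ofPred_forall]
  exact (isClosed_iInter fun x => isClosed_le continuous_const (continuous_apply x)).inter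
    ((isClosed_eq (by fun_prop) continuous_const).inter
      (isClosed_eq (by fun_prop) continuous_const))

lemma isCompact_balancedSet (hf : ∀ x, f x = 1 ∨ f x = -1) : IsCompact (balancedSet f) :=
  (isCompact_stdSimplex ℝ X).of_isClosed_subset isClosed_balancedSet
    fun _ hd => ⟨hd.1, sum_eq_one_of_mem_balancedSet hf hd⟩

lemma single_add_single_mem_balancedSet [DecidableEq X] {x y : X} (hx : f x = 1)
    (hy : f y = -1) :
    Pi.single x (1 / 2) + Pi.single y (1 / 2) ∈ balancedSet f := by
  refine ⟨fun z => ?_, ?_, ?_⟩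
  · simp only [Pi.add_apply, Pi.single_apply]; split_ifs <;> norm_num
  all_goals norm_num [sum_add_distrib, Finset.sum_pi_single', hx, hy]

lemma balancedSet_nonempty (hpos : ∃ x, f x = 1) (hneg : ∃ y, f y = -1) :
    (balancedSet f).Nonempty := by
  classical
  obtain ⟨x, hx⟩ := hpos
  obtain ⟨y, hy⟩ := hneg
  exact ⟨_, single_add_single_mem_balancedSet hx hy⟩

end balancedSet

theorem le_maxEdge_of_mem_marginSet (hf : ∀ x, f x = 1 ∨ f x = -1) {H : I → X → ℝ}
    {ρ : ℝ} (hρ : ρ ∈ marginSet f H) {d : X → ℝ} (hd : d ∈ balancedSet f) :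
    ρ ≤ maxEdge f H d := by
  obtain ⟨w, hw, b, hρ⟩ := hρ
  calc ρ = ∑ x, d x * ρ := by rw [← sum_mul, sum_eq_one_of_mem_balancedSet hf hd, one_mul]
    _ ≤ ∑ x, d x * (f x * (∑ i, w i * H i x + b)) :=
        sum_le_sum fun x _ => mul_le_mul_of_nonneg_left (hρ x) (hd.1 x)
    _ = (d ᵥ* edgeMatrix f H) ⬝ᵥ w + b * ∑ x, d x * f x := by
        rw [vecMul_edgeMatrix_dotProduct, mul_sum, ← sum_add_distrib]
        exact sum_congr rfl fun x _ => by ring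
    _ = (d ᵥ* edgeMatrix f H) ⬝ᵥ w := by
        rw [sum_mul_eq_zero_of_mem_balancedSet hf hd, mul_zero, add_zero]
    _ ≤ _ := dotProduct_le_iSup_of_mem_stdSimplex hw _

lemma exists_forall_le_mul_add (hf : ∀ x, f x = 1 ∨ f x = -1) (hpos : ∃ x, f x = 1)
    {g : X → ℝ} {m : ℝ} (hg : ∀ x y, f x = 1 → f y = -1 → 2 * m ≤ g x - g y) :
    ∃ b, ∀ x, m ≤ f x * (g x + b) := by
  obtain ⟨x, hx⟩ := hpos
  obtain ⟨x₀, hx₀, hmin⟩ :=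
    (univ.filter (f · = 1)).exists_min_image g ⟨x, by simpa using hx⟩
  refine ⟨m - g x₀, fun y => ?_⟩
  rcases hf y with hy | hy
  · have := hmin y (by simpa using hy)
    rw [hy]
    linarith
  · have := hg x₀ y (by simpa using hx₀) hy
    rw [hy]
    linarith

theorem exists_mem_balancedSet_maxEdge_mem_marginSet [Nonempty I]
    (hf : ∀ x, f x = 1 ∨ f x = -1) (hpos : ∃ x, f x = 1) (hneg : ∃ y, f y = -1) (H : I → X → ℝ) :
    ∃ d ∈ balancedSet f, maxEdge f H d ∈ marginSet f H := by
  classical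
  obtain ⟨d, hd, w, hw, hsaddle⟩ := (edgeMatrix f H).exists_saddlePoint_vecMul_dotProduct
    (balancedSet_nonempty hpos hneg) convex_balancedSet (isCompact_balancedSet hf)
    ⟨_, single_mem_stdSimplex ℝ (Classical.arbitrary I)⟩ (convex_stdSimplex ℝ I)
    (isCompact_stdSimplex ℝ I)
  have hle : ∀ d' ∈ balancedSet f, maxEdge f H d ≤ (d' ᵥ* edgeMatrix f H) ⬝ᵥ w :=
    fun d' hd' => ciSup_le fun i => by
      simpa [dotProduct_single] using hsaddle d' hd' _ (single_mem_stdSimplex ℝ i)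
  refine ⟨d, hd, w, hw, exists_forall_le_mul_add hf hpos fun x' y' hx' hy' => ?_⟩
  have := hle _ (single_add_single_mem_balancedSet hx' hy')
  rw [vecMul_edgeMatrix_dotProduct] at this
  simp [Pi.single_apply, add_mul, ite_mul, sum_add_distrib, hx', hy'] at this
  linarith

theorem sSup_marginSet_eq_sInf_maxEdge_image [Nonempty I]
    (hf : ∀ x, f x = 1 ∨ f x = -1) (hpos : ∃ x, f x = 1) (hneg : ∃ y, f y = -1)
    (H : I → X → ℝ) :
    sSup (marginSet f H) = sInf (maxEdge f H '' balancedSet f) := by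
  obtain ⟨d, hd, hmargin⟩ := exists_mem_balancedSet_maxEdge_mem_marginSet hf hpos hneg H
  have hgreatest : IsGreatest (marginSet f H) (maxEdge f H d) :=
    ⟨hmargin, fun ρ hρ => le_maxEdge_of_mem_marginSet hf hρ hd⟩
  have hleast : IsLeast (maxEdge f H '' balancedSet f) (maxEdge f H d) := by
    refine ⟨⟨d, hd, rfl⟩, ?_⟩
    rintro _ ⟨d', hd', rfl⟩
    exact le_maxEdge_of_mem_marginSet hf hmargin hd'
  rw [hgreatest.csSup_eq, hleast.csInf_eq]

end Margin

/-- LP duality: for non-constant `f : {-1,1}^n → {-1,1}`, the maximum margin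
over convex weight vectors `w` (with bias `b`) equals the minimum over balanced distributions
`d` of the largest edge `max_i Σ_x d_x f(x) h_i(x)` of the projection hypotheses. -/
theorem stmt14 (n : ℕ) (hn : 1 ≤ n) (f : (Fin n → Bool) → ℝ)
    (hf : ∀ x, f x = 1 ∨ f x = -1)
    (hfnc : ∃ x y, f x ≠ f y) :
    sSup {ρ : ℝ | ∃ w : Fin (2 * n) → ℝ, (∀ i, 0 ≤ w i) ∧ ∑ i, w i = 1 ∧
        ∃ b : ℝ, ∀ x, ρ ≤ f x * (∑ i, w i * hyp n i x + b)} =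
    sInf {e : ℝ | ∃ d : (Fin n → Bool) → ℝ, (∀ x, 0 ≤ d x) ∧
        (∑ x ∈ Finset.univ.filter (fun x => f x = 1), d x = 1/2) ∧
        (∑ x ∈ Finset.univ.filter (fun x => f x = -1), d x = 1/2) ∧
        e = ⨆ i : Fin (2 * n), ∑ x, d x * f x * hyp n i x} := by
  have : Nonempty (Fin (2 * n)) := ⟨⟨0, by omega⟩⟩
  obtain ⟨hpos, hneg⟩ := Margin.exists_eq_one_and_exists_eq_neg_one hf hfnc
  convert Margin.sSup_marginSet_eq_sInf_maxEdge_image hf hpos hneg (hyp n) using 2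
  · ext ρ
    simp [Margin.marginSet, stdSimplex, and_assoc]
  · ext e
    simp [Margin.balancedSet, Margin.maxEdge, Margin.edgeMatrix, vecMul, dotProduct, mul_assoc,
      and_assoc, eq_comm]
end
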